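/- Let r ∈ (0,1) and ρ_D ∈ [0,1], and set ρ_R = (1 + √(1 − 4r(1−r)(1 − ρ_D)))/2. Then: (i) ρ_R ∈ [1/2, 1]; (ii) ρ_R is a strictly increasing function of ρ_D; (iii) if ρ_D < 1 then ρ_R > ρ_D, and ρ_D = 1 if and only if ρ_R = 1; (iv) for fixed ρ_D, ρ_R is minimized over r at r = 1/2, where ρ_R = (1 + √ρ_D)/2. -/

import Mathlib

/-! Writing `s = 4r(1-r)`, we have `0 < s ≤ 1` for `r ∈ (0,1)`, and
`ρ_R = (1 + √(1 - s(1-ρ_D)))/2` is an increasing function of the radicand `1 - s(1-ρ_D)`, which is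
affine and increasing in `ρ_D` and lies between `ρ_D` and `1`. Since `s ≤ 1` with equality exactly
at `r = 1/2`, the radicand is smallest there, where it equals `ρ_D`; the bound `ρ_D < ρ_R` then
follows from the elementary `2ρ - 1 < √ρ` for `ρ < 1`. -/

/-- The random-scan rate as a function of the selection probability and the
deterministic-scan rate. -/
noncomputable def rhoR (r ρD : ℝ) : ℝ :=
  (1 + Real.sqrt (1 - 4 * r * (1 - r) * (1 - ρD))) / 2

open Real Set

lemma four_mul_mul_one_sub_le_one (r : ℝ) : 4 * r * (1 - r) ≤ 1 := by
  nlinarith [sq_nonneg (2 * r - 1)]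

lemma one_half_le_rhoR (r ρ : ℝ) : 1 / 2 ≤ rhoR r ρ := by
  unfold rhoR
  linarith [sqrt_nonneg (1 - 4 * r * (1 - r) * (1 - ρ))]

lemma rhoR_le_one {r ρ : ℝ} (hr : 0 ≤ r) (hr1 : r ≤ 1) (hρ : ρ ≤ 1) : rhoR r ρ ≤ 1 := by
  have hradicand : 1 - 4 * r * (1 - r) * (1 - ρ) ≤ 1 := by
    have : 0 ≤ 4 * r * (1 - r) * (1 - ρ) := by
      have := sub_nonneg.2 hr1; have := sub_nonneg.2 hρ; positivity
    linarith
  have := sqrt_le_one.2 hradicand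
  unfold rhoR
  linarith

lemma rhoR_half (ρ : ℝ) : rhoR (1 / 2) ρ = (1 + √ρ) / 2 := by
  unfold rhoR
  norm_num

lemma rhoR_half_le {ρ : ℝ} (hρ : ρ ≤ 1) (r : ℝ) : rhoR (1 / 2) ρ ≤ rhoR r ρ := by
  have hradicand : ρ ≤ 1 - 4 * r * (1 - r) * (1 - ρ) := by
    nlinarith [mul_nonneg (sub_nonneg.2 (four_mul_mul_one_sub_le_one r)) (sub_nonneg.2 hρ)]
  rw [rhoR_half]
  unfold rhoR
  linarith [sqrt_le_sqrt hradicand]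

lemma two_mul_sub_one_lt_sqrt {ρ : ℝ} (hρ : ρ < 1) : 2 * ρ - 1 < √ρ := by
  rcases lt_or_ge (2 * ρ - 1) 0 with hneg | hnonneg
  · exact hneg.trans_le (sqrt_nonneg ρ)
  · rw [lt_sqrt hnonneg]
    nlinarith

lemma lt_rhoR {ρ : ℝ} (hρ : ρ < 1) (r : ℝ) : ρ < rhoR r ρ :=
  calc ρ < (1 + √ρ) / 2 := by linarith [two_mul_sub_one_lt_sqrt hρ]
    _ = rhoR (1 / 2) ρ := (rhoR_half ρ).symm
    _ ≤ rhoR r ρ := rhoR_half_le hρ.le r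

lemma rhoR_strictMonoOn {r : ℝ} (hr : 0 < r) (hr1 : r < 1) : StrictMonoOn (rhoR r) (Ici 0) := by
  have hs : 0 < 4 * r * (1 - r) := by nlinarith
  intro ρ₁ hρ₁ ρ₂ _ hlt
  have hradicand_nonneg : 0 ≤ 1 - 4 * r * (1 - r) * (1 - ρ₁) := by
    nlinarith [four_mul_mul_one_sub_le_one r, mem_Ici.1 hρ₁]
  have hradicand_lt : 1 - 4 * r * (1 - r) * (1 - ρ₁) < 1 - 4 * r * (1 - r) * (1 - ρ₂) := by
    nlinarith
  unfold rhoR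
  linarith [sqrt_lt_sqrt hradicand_nonneg hradicand_lt]

lemma rhoR_eq_one_iff {r ρ : ℝ} (hr : r ≠ 0) (hr1 : r ≠ 1) : rhoR r ρ = 1 ↔ ρ = 1 := by
  have hs : 4 * r * (1 - r) ≠ 0 :=
    mul_ne_zero (mul_ne_zero four_ne_zero hr) (sub_ne_zero.2 hr1.symm)
  calc rhoR r ρ = 1 ↔ √(1 - 4 * r * (1 - r) * (1 - ρ)) = 1 := by
        unfold rhoR; constructor <;> intro h <;> linarith
    _ ↔ 4 * r * (1 - r) * (1 - ρ) = 0 := by rw [sqrt_eq_one]; constructor <;> intro h <;> linarith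
    _ ↔ ρ = 1 := by rw [mul_eq_zero_iff_left hs, sub_eq_zero, eq_comm]

theorem stmt_10_general (r ρD : ℝ) (hr : 0 < r) (hr1 : r < 1) (hρD1 : ρD ≤ 1) :
    (1/2 ≤ rhoR r ρD ∧ rhoR r ρD ≤ 1) ∧
    (∀ ρ₁ ρ₂ : ℝ, 0 ≤ ρ₁ → ρ₂ ≤ 1 → ρ₁ < ρ₂ → rhoR r ρ₁ < rhoR r ρ₂) ∧
    ((ρD < 1 → ρD < rhoR r ρD) ∧ (ρD = 1 ↔ rhoR r ρD = 1)) ∧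
    ((∀ r' : ℝ, 0 < r' → r' < 1 → rhoR (1/2) ρD ≤ rhoR r' ρD) ∧
      rhoR (1/2) ρD = (1 + Real.sqrt ρD) / 2) := by
  refine ⟨⟨one_half_le_rhoR r ρD, rhoR_le_one hr.le hr1.le hρD1⟩, ?_,
    ⟨fun h => lt_rhoR h r, (rhoR_eq_one_iff hr.ne' hr1.ne).symm⟩,
    fun r' _ _ => rhoR_half_le hρD1 r', rhoR_half ρD⟩
  intro ρ₁ ρ₂ hρ₁ _ hlt
  exact rhoR_strictMonoOn hr hr1 hρ₁ (mem_Ici.2 (hρ₁.trans hlt.le)) hlt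

/-- For `r ∈ (0,1)` and `ρ_D ∈ [0,1]`: (i) `ρ_R ∈ [1/2,1]`; (ii) `ρ_R` is strictly
increasing in `ρ_D`; (iii) `ρ_D < 1 → ρ_R > ρ_D`, and `ρ_D = 1 ↔ ρ_R = 1`;
(iv) over `r`, `ρ_R` is minimized at `r = 1/2`, where `ρ_R = (1+√ρ_D)/2`. -/
theorem stmt_10 (r ρD : ℝ) (hr : 0 < r) (hr1 : r < 1) (hρD0 : 0 ≤ ρD) (hρD1 : ρD ≤ 1) :
    (1/2 ≤ rhoR r ρD ∧ rhoR r ρD ≤ 1) ∧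
    (∀ ρ₁ ρ₂ : ℝ, 0 ≤ ρ₁ → ρ₂ ≤ 1 → ρ₁ < ρ₂ → rhoR r ρ₁ < rhoR r ρ₂) ∧
    ((ρD < 1 → ρD < rhoR r ρD) ∧ (ρD = 1 ↔ rhoR r ρD = 1)) ∧
    ((∀ r' : ℝ, 0 < r' → r' < 1 → rhoR (1/2) ρD ≤ rhoR r' ρD) ∧
      rhoR (1/2) ρD = (1 + Real.sqrt ρD) / 2) :=
  stmt_10_general r ρD hr hr1 hρD1
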